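/- If (E,φ) admits a contracting fibered structure over (X,ψ), then h_pol(φ) = h_pol(ψ). -/

import Mathlib

open Set Filter Metric

/-- The dynamical metric `d_n^f(x,y) = max_{0 ≤ k ≤ n-1} d(f^k x, f^k y)`. -/
noncomputable def dynDist {X : Type*} [PseudoMetricSpace X] (f : X → X) (n : ℕ) (x y : X) : ℝ :=
  (((Finset.range n).sup fun k => nndist (f^[k] x) (f^[k] y)) : NNReal)

/-- `G_n^f(ε)`: the minimal number of `d_n^f`-balls of radius `ε` covering the space. -/
noncomputable def coverNum {X : Type*} [PseudoMetricSpace X] (f : X → X) (n : ℕ) (ε : ℝ) : ℕ :=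
  sInf {m : ℕ | ∃ s : Finset X, s.card = m ∧ ∀ x : X, ∃ c ∈ s, dynDist f n c x < ε}

/-- The strong polynomial entropy `h_pol(f) = sup_{ε>0} limsup_n log G_n^f(ε) / log n`. -/
noncomputable def hpol {X : Type*} [PseudoMetricSpace X] (f : X → X) : ENNReal :=
  ⨆ ε : {e : ℝ // 0 < e},
    Filter.limsup
      (fun n : ℕ => ENNReal.ofReal (Real.log (coverNum f n (ε : ℝ)) / Real.log n))
      Filter.atTop

/-- A covering of `X` by dynamical balls `B_{n_i}^f(x_i, ε)` with all orders `n_i ≥ N`. -/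
def IsDynCover {X : Type*} [PseudoMetricSpace X] (f : X → X) (ε : ℝ) (N : ℕ)
    (C : Set (X × ℕ)) : Prop :=
  (∀ p ∈ C, N ≤ p.2) ∧ ∀ x : X, ∃ p ∈ C, dynDist f p.2 p.1 x < ε

/-- The weight `M(C,s) = Σ_i n_i^{-s}` of a covering by dynamical balls. -/
noncomputable def covWeight {X : Type*} (C : Set (X × ℕ)) (s : ℝ) : ENNReal :=
  ∑' p : C, ((p : X × ℕ).2 : ENNReal) ^ (-s)

/-- `Δ^f(ε,s) = sup_{N ≥ 1} inf { M(C,s) | C a covering by dynamical balls of orders ≥ N }`. -/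
noncomputable def dynDelta {X : Type*} [PseudoMetricSpace X] (f : X → X) (ε s : ℝ) : ENNReal :=
  ⨆ N : ℕ, ⨅ C : {C : Set (X × ℕ) // IsDynCover f ε (N + 1) C}, covWeight (C : Set (X × ℕ)) s

/-- The critical exponent `s_c^f(ε)`, i.e. the supremum of the `s ≥ 0` with `Δ^f(ε,s) = ∞`. -/
noncomputable def scrit {X : Type*} [PseudoMetricSpace X] (f : X → X) (ε : ℝ) : ENNReal :=
  sSup {x : ENNReal | ∃ s : ℝ, 0 ≤ s ∧ x = ENNReal.ofReal s ∧ dynDelta f ε s = ⊤}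

/-- The weak polynomial entropy `h_pol^*(f) = sup_{ε>0} s_c^f(ε)`. -/
noncomputable def hpolStar {X : Type*} [PseudoMetricSpace X] (f : X → X) : ENNReal :=
  ⨆ ε : {e : ℝ // 0 < e}, scrit f (ε : ℝ)

open Topology

/-!
Covers of `E` project to covers of `X` along the factor map `π`, so `h_pol(ψ) ≤ h_pol(φ)`.
Conversely, let `δ` be a Lebesgue number of the cover `(U_i)`. If the `ψ`-orbits of `π z` and
`π z'` stay `δ`-close for `n` steps, then at every step `φ^k z` and `φ^k z'` lie in a common chart,
and condition (iii) keeps their fibre distance below `d(z, z')`. Hence `d_n^φ(z, z') < δ` as soon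
as `d(z, z') < δ` and `d_n^ψ(π z, π z') < δ`, which gives `G_n^φ(δ) ≤ K · G_n^ψ(δ/2)` with `K`
the size of a `δ/2`-net of `E`, independent of `n`; the constant `K` is invisible to
`log G_n / log n` in the limit.
-/

section DynDist

variable {Y : Type*} [PseudoMetricSpace Y] {f : Y → Y} {n : ℕ} {ε : ℝ}

theorem dynDist_eq_dist (f : Y → Y) (n : ℕ) (x y : Y) :
    dynDist f n x y = dist (fun k : Fin n => f^[k] x) (fun k : Fin n => f^[k] y) := by
  rw [dynDist, dist_pi_def, ← Nat.Iio_eq_range, ← Fin.map_valEmbedding_univ, Finset.sup_map]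
  rfl

theorem dist_iterate_le_dynDist (f : Y → Y) {k : ℕ} (hk : k < n) (x y : Y) :
    dist (f^[k] x) (f^[k] y) ≤ dynDist f n x y := by
  rw [dynDist_eq_dist]
  exact dist_le_pi_dist (fun k : Fin n => f^[k] x) (fun k : Fin n => f^[k] y) ⟨k, hk⟩

theorem dynDist_lt_iff (f : Y → Y) (n : ℕ) (hε : 0 < ε) {x y : Y} :
    dynDist f n x y < ε ↔ ∀ k < n, dist (f^[k] x) (f^[k] y) < ε := by
  rw [dynDist_eq_dist, dist_pi_lt_iff hε, Fin.forall_iff]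

theorem dynDist_self (f : Y → Y) (n : ℕ) (x : Y) : dynDist f n x x = 0 := by
  rw [dynDist_eq_dist, dist_self]

theorem dynDist_comm (f : Y → Y) (n : ℕ) (x y : Y) : dynDist f n x y = dynDist f n y x := by
  rw [dynDist_eq_dist, dynDist_eq_dist, dist_comm]

theorem dynDist_triangle (f : Y → Y) (n : ℕ) (x y z : Y) :
    dynDist f n x z ≤ dynDist f n x y + dynDist f n y z := by
  simp only [dynDist_eq_dist]
  exact dist_triangle _ _ _

theorem continuous_dynDist (hf : Continuous f) (n : ℕ) (x : Y) : Continuous (dynDist f n x) := by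
  simp only [funext (dynDist_eq_dist f n x)]
  exact continuous_const.dist (continuous_pi fun k => hf.iterate k)

theorem coverNum_le_card {s : Finset Y} (hs : ∀ x, ∃ c ∈ s, dynDist f n c x < ε) :
    coverNum f n ε ≤ s.card :=
  Nat.sInf_le ⟨s, rfl, hs⟩

theorem exists_finset_card_eq_coverNum [CompactSpace Y] (hf : Continuous f) (n : ℕ)
    (hε : 0 < ε) :
    ∃ s : Finset Y, s.card = coverNum f n ε ∧ ∀ x, ∃ c ∈ s, dynDist f n c x < ε := by
  obtain ⟨s, hs⟩ := isCompact_univ.elim_finite_subcover (fun c => {x | dynDist f n c x < ε})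
    (fun c => isOpen_lt (continuous_dynDist hf n c) continuous_const)
    (fun x _ => mem_iUnion.2 ⟨x, by simpa [dynDist_self] using hε⟩)
  have hne : {m | ∃ s : Finset Y, s.card = m ∧ ∀ x, ∃ c ∈ s, dynDist f n c x < ε}.Nonempty :=
    ⟨s.card, s, rfl, fun x => by simpa using hs (mem_univ x)⟩
  exact Nat.sInf_mem hne

theorem coverNum_le_card_of_forall_dynDist_lt {ι : Type*} {I : Finset ι} {A : ι → Set Y}
    (hcov : ∀ y, ∃ i ∈ I, y ∈ A i) (hsmall : ∀ i ∈ I, ∀ y ∈ A i, ∀ y' ∈ A i, dynDist f n y y' < ε) :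
    coverNum f n ε ≤ I.card := by
  classical
  rcases isEmpty_or_nonempty Y with hY | hY
  · exact (coverNum_le_card (s := ∅) isEmptyElim).trans (Nat.zero_le _)
  calc coverNum f n ε ≤ (I.image fun i => Classical.epsilon (· ∈ A i)).card :=
        coverNum_le_card fun y => by
          obtain ⟨i, hi, hy⟩ := hcov y
          exact ⟨_, Finset.mem_image_of_mem _ hi,
            hsmall i hi _ (Classical.epsilon_spec ⟨y, hy⟩) y hy⟩
    _ ≤ I.card := Finset.card_image_le

end DynDist

theorem Real.log_natCast_le_log_add_log {a K b : ℕ} (h : a ≤ K * b) :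
    Real.log a ≤ Real.log K + Real.log b := by
  rcases Nat.eq_zero_or_pos a with rfl | ha
  · rw [Nat.cast_zero, Real.log_zero]
    positivity
  · have hK : K ≠ 0 := by rintro rfl; omega
    have hb : b ≠ 0 := by rintro rfl; omega
    rw [← Real.log_mul (by exact_mod_cast hK) (by exact_mod_cast hb)]
    exact Real.log_le_log (by exact_mod_cast ha) (by exact_mod_cast h)

theorem tendsto_ofReal_div_log_atTop (c : ℝ) :
    Tendsto (fun n : ℕ => ENNReal.ofReal (c / Real.log n)) atTop (𝓝 0) := by
  simpa using ENNReal.tendsto_ofReal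
    (tendsto_const_nhds.div_atTop (Real.tendsto_log_atTop.comp tendsto_natCast_atTop_atTop))

theorem hpol_le_of_coverNum_le_mul {Y Z : Type*} [PseudoMetricSpace Y] [PseudoMetricSpace Z]
    {f : Y → Y} {g : Z → Z}
    (h : ∀ ε > 0, ∃ δ > 0, ∃ K : ℕ, ∀ n, coverNum f n ε ≤ K * coverNum g n δ) :
    hpol f ≤ hpol g := by
  refine iSup_le fun ⟨ε, hε⟩ => ?_
  obtain ⟨δ, hδ, K, hK⟩ := h ε hε
  refine le_iSup_of_le ⟨δ, hδ⟩ ?_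
  calc limsup (fun n : ℕ => ENNReal.ofReal (Real.log (coverNum f n ε) / Real.log n)) atTop
      ≤ limsup ((fun n : ℕ => ENNReal.ofReal (Real.log K / Real.log n)) +
          fun n => ENNReal.ofReal (Real.log (coverNum g n δ) / Real.log n)) atTop := by
        refine limsup_le_limsup (Eventually.of_forall fun n => ?_)
        rw [Pi.add_apply, ← ENNReal.ofReal_add (by positivity) (by positivity), ← add_div]
        exact ENNReal.ofReal_le_ofReal (div_le_div_of_nonneg_right
          (Real.log_natCast_le_log_add_log (hK n)) (Real.log_natCast_nonneg n))
    _ = _ := ENNReal.limsup_add_of_left_tendsto_zero (tendsto_ofReal_div_log_atTop _) _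

section Factor

variable {E X : Type*} [PseudoMetricSpace E] [PseudoMetricSpace X] {φ : E → E} {ψ : X → X}
  {π : E → X} {n : ℕ} {ε δ : ℝ}

theorem dynDist_lt_of_semiconj (h : Function.Semiconj π φ ψ) (hε : 0 < ε)
    (hπ : ∀ z z', dist z z' < δ → dist (π z) (π z') < ε) {z z' : E}
    (hzz' : dynDist φ n z z' < δ) : dynDist ψ n (π z) (π z') < ε := by
  refine (dynDist_lt_iff ψ n hε).2 fun k hk => ?_
  rw [← h.iterate_right k z, ← h.iterate_right k z']
  exact hπ _ _ ((dist_iterate_le_dynDist φ hk z z').trans_lt hzz')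

theorem coverNum_le_coverNum_of_semiconj [CompactSpace E] (hφ : Continuous φ)
    (hπs : Function.Surjective π) (h : Function.Semiconj π φ ψ) (hε : 0 < ε) (hδ : 0 < δ)
    (hπ : ∀ z z', dist z z' < δ → dist (π z) (π z') < ε) (n : ℕ) :
    coverNum ψ n ε ≤ coverNum φ n δ := by
  classical
  obtain ⟨s, hcard, hs⟩ := exists_finset_card_eq_coverNum hφ n hδ
  calc coverNum ψ n ε ≤ (s.image π).card := coverNum_le_card fun x => by
        obtain ⟨z, rfl⟩ := hπs x
        obtain ⟨c, hc, hcz⟩ := hs z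
        exact ⟨π c, Finset.mem_image_of_mem π hc, dynDist_lt_of_semiconj h hε hπ hcz⟩
    _ ≤ s.card := Finset.card_image_le
    _ = coverNum φ n δ := hcard

theorem hpol_le_of_semiconj [CompactSpace E] (hφ : Continuous φ) (hπ : UniformContinuous π)
    (hπs : Function.Surjective π) (h : Function.Semiconj π φ ψ) : hpol ψ ≤ hpol φ := by
  refine hpol_le_of_coverNum_le_mul fun ε hε => ?_
  obtain ⟨δ, hδ, hπδ⟩ := Metric.uniformContinuous_iff.1 hπ ε hε
  exact ⟨δ, hδ, 1, fun n => by
    rw [one_mul]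
    exact coverNum_le_coverNum_of_semiconj hφ hπs h hε hδ hπδ n⟩

theorem coverNum_le_mul_of_dynDist_lt [CompactSpace E] [CompactSpace X] (hψ : Continuous ψ)
    (hδ : 0 < δ)
    (h : ∀ n z z', dynDist ψ n (π z) (π z') < δ → dist z z' < δ → dynDist φ n z z' < ε) :
    ∃ K : ℕ, ∀ n, coverNum φ n ε ≤ K * coverNum ψ n (δ / 2) := by
  obtain ⟨T, hT⟩ := isCompact_univ.elim_finite_subcover (fun t : E => ball t (δ / 2))
    (fun _ => isOpen_ball) (fun z _ => mem_iUnion.2 ⟨z, mem_ball_self (half_pos hδ)⟩)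
  refine ⟨T.card, fun n => ?_⟩
  obtain ⟨s, hcard, hs⟩ := exists_finset_card_eq_coverNum hψ n (half_pos hδ)
  calc coverNum φ n ε ≤ (T ×ˢ s).card := by
        refine coverNum_le_card_of_forall_dynDist_lt
          (A := fun p => {z | dist p.1 z < δ / 2 ∧ dynDist ψ n p.2 (π z) < δ / 2}) ?_ ?_
        · intro z
          obtain ⟨t, ht, hzt⟩ := mem_iUnion₂.1 (hT (mem_univ z))
          obtain ⟨x, hx, hxz⟩ := hs (π z)
          exact ⟨(t, x), Finset.mem_product.2 ⟨ht, hx⟩, mem_ball'.1 hzt, hxz⟩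
        · rintro ⟨t, x⟩ - z ⟨hz, hπz⟩ z' ⟨hz', hπz'⟩
          refine h n z z' ?_ ?_
          · calc dynDist ψ n (π z) (π z') ≤ dynDist ψ n (π z) x + dynDist ψ n x (π z') :=
                  dynDist_triangle ψ n _ _ _
              _ < δ / 2 + δ / 2 := add_lt_add (by rwa [dynDist_comm]) hπz'
              _ = δ := add_halves δ
          · calc dist z z' ≤ dist z t + dist t z' := dist_triangle _ _ _
              _ < δ / 2 + δ / 2 := add_lt_add (by rwa [dist_comm]) hz'
              _ = δ := add_halves δ
    _ = T.card * coverNum ψ n (δ / 2) := by rw [Finset.card_product, hcard]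

theorem hpol_le_of_dynDist_lt [CompactSpace E] [CompactSpace X] (hψ : Continuous ψ)
    (h : ∀ ε > 0, ∃ δ > 0,
      ∀ n z z', dynDist ψ n (π z) (π z') < δ → dist z z' < δ → dynDist φ n z z' < ε) :
    hpol φ ≤ hpol ψ := by
  refine hpol_le_of_coverNum_le_mul fun ε hε => ?_
  obtain ⟨δ, hδ, hδε⟩ := h ε hε
  obtain ⟨K, hK⟩ := coverNum_le_mul_of_dynDist_lt hψ hδ hδε
  exact ⟨δ / 2, half_pos hδ, K, hK⟩

end Factor

section Fibered

variable {E X F ι : Type*} [PseudoMetricSpace E] [PseudoMetricSpace X] [PseudoMetricSpace F]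
  {φ : E → E} {ψ : X → X} {π : E → X} {U : ι → Set X}

/-- Condition (iii) of a contracting fibered structure, `ϖ_i` being `(tr i ·).2`. -/
def FiberContracting (φ : E → E) (tr : ∀ i, (π ⁻¹' U i : Set E) → U i × F) : Prop :=
  ∀ i j (z z' : E) (hz : z ∈ π ⁻¹' U i) (hz' : z' ∈ π ⁻¹' U i)
    (hfz : φ z ∈ π ⁻¹' U j) (hfz' : φ z' ∈ π ⁻¹' U j),
    dist (tr j ⟨φ z, hfz⟩).2 (tr j ⟨φ z', hfz'⟩).2 ≤ dist (tr i ⟨z, hz⟩).2 (tr i ⟨z', hz'⟩).2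

variable {tr : ∀ i, (π ⁻¹' U i : Set E) → U i × F}

theorem dist_snd_tr_iterate_le (htr : ∀ i, Isometry (tr i)) (hc : FiberContracting φ tr)
    {n : ℕ} {z z' : E} (hchart : ∀ k < n, ∃ i, φ^[k] z ∈ π ⁻¹' U i ∧ φ^[k] z' ∈ π ⁻¹' U i) :
    ∀ k ≤ n, ∀ j (w w' : π ⁻¹' U j), (w : E) = φ^[k] z → (w' : E) = φ^[k] z' →
      dist (tr j w).2 (tr j w').2 ≤ dist z z' := by
  intro k
  induction k with
  | zero =>
    rintro - j ⟨w, hw⟩ ⟨w', hw'⟩ rfl rfl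
    calc dist (tr j ⟨w, hw⟩).2 (tr j ⟨w', hw'⟩).2 ≤ dist (tr j ⟨w, hw⟩) (tr j ⟨w', hw'⟩) :=
          (le_max_right _ _).trans_eq Prod.dist_eq.symm
      _ = dist w w' := by rw [(htr j).dist_eq, Subtype.dist_eq]
  | succ k ih =>
    rintro hk j ⟨w, hw⟩ ⟨w', hw'⟩ hwz hwz'
    rw [Function.iterate_succ_apply'] at hwz hwz'
    subst hwz hwz'
    obtain ⟨i, hzi, hzi'⟩ := hchart k hk
    exact (hc i j _ _ hzi hzi' hw hw').trans
      (ih (Nat.le_succ k |>.trans hk) i ⟨_, hzi⟩ ⟨_, hzi'⟩ rfl rfl)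

theorem dynDist_lt_of_fiberContracting (htr : ∀ i, Isometry (tr i))
    (hfst : ∀ i (z : (π ⁻¹' U i : Set E)), ((tr i z).1 : X) = π z) (hc : FiberContracting φ tr)
    (h : Function.Semiconj π φ ψ) {δ : ℝ} (hδ : 0 < δ) (hleb : ∀ x, ∃ i, ball x δ ⊆ U i)
    {n : ℕ} {z z' : E} (hπ : dynDist ψ n (π z) (π z') < δ) (hd : dist z z' < δ) :
    dynDist φ n z z' < δ := by
  have hbase := (dynDist_lt_iff ψ n hδ).1 hπ
  have hchart : ∀ k < n, ∃ i, φ^[k] z ∈ π ⁻¹' U i ∧ φ^[k] z' ∈ π ⁻¹' U i := by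
    intro k hk
    obtain ⟨i, hi⟩ := hleb (ψ^[k] (π z))
    refine ⟨i, ?_, ?_⟩ <;> rw [mem_preimage, h.iterate_right k]
    · exact hi (mem_ball_self hδ)
    · exact hi (mem_ball'.2 (hbase k hk))
  refine (dynDist_lt_iff φ n hδ).2 fun k hk => ?_
  obtain ⟨i, hzi, hzi'⟩ := hchart k hk
  rw [← Subtype.dist_eq ⟨_, hzi⟩ ⟨_, hzi'⟩, ← (htr i).dist_eq, Prod.dist_eq, Subtype.dist_eq,
    hfst, hfst, h.iterate_right k, h.iterate_right k]
  exact max_lt (hbase k hk)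
    ((dist_snd_tr_iterate_le htr hc hchart k hk.le i ⟨_, hzi⟩ ⟨_, hzi'⟩ rfl rfl).trans_lt hd)

end Fibered

theorem stmt8_general {E X F : Type*} [MetricSpace E] [CompactSpace E] [MetricSpace X] [CompactSpace X]
    [MetricSpace F]
    (φ : E → E) (ψ : X → X) (hφ : Continuous φ) (hψ : Continuous ψ)
    (π : E → X) (hπc : Continuous π) (hπs : Function.Surjective π)
    (m : ℕ) (U : Fin m → Set X) (hUo : ∀ i, IsOpen (U i)) (hUcov : (⋃ i, U i) = Set.univ)
    (tr : ∀ i, (π ⁻¹' (U i) : Set E) → (U i × F))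
    (htr_iso : ∀ i, Isometry (tr i))
    (htr_fst : ∀ i (z : (π ⁻¹' (U i) : Set E)), ((tr i z).1 : X) = π (z : E))
    (hsemi : ψ ∘ π = π ∘ φ)
    (hcontract : ∀ i j (z z' : E) (hz : z ∈ π ⁻¹' (U i)) (hz' : z' ∈ π ⁻¹' (U i))
      (hfz : φ z ∈ π ⁻¹' (U j)) (hfz' : φ z' ∈ π ⁻¹' (U j)),
      dist (tr j ⟨φ z, hfz⟩).2 (tr j ⟨φ z', hfz'⟩).2 ≤ dist (tr i ⟨z, hz⟩).2 (tr i ⟨z', hz'⟩).2) :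
    hpol φ = hpol ψ := by
  have h : Function.Semiconj π φ ψ := fun z => (congrFun hsemi z).symm
  obtain ⟨ρ, hρ, hleb⟩ := lebesgue_number_lemma_of_metric isCompact_univ hUo hUcov.superset
  refine le_antisymm (hpol_le_of_dynDist_lt (π := π) hψ fun ε hε => ⟨min ρ ε, lt_min hρ hε, ?_⟩)
    (hpol_le_of_semiconj hφ (CompactSpace.uniformContinuous_of_continuous hπc) hπs h)
  have hleb' : ∀ x, ∃ i, ball x (min ρ ε) ⊆ U i := fun x =>
    let ⟨i, hi⟩ := hleb x (mem_univ x)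
    ⟨i, (ball_subset_ball (min_le_left _ _)).trans hi⟩
  exact fun n z z' hπ hd => (dynDist_lt_of_fiberContracting htr_iso htr_fst hcontract h
    (lt_min hρ hε) hleb' hπ hd).trans_le (min_le_right _ _)

/-- If `(E,φ)` admits a contracting fibered structure over `(X,ψ)`, then
`h_pol(φ) = h_pol(ψ)`. -/
theorem stmt8 {E X F : Type*} [MetricSpace E] [CompactSpace E] [MetricSpace X] [CompactSpace X]
    [MetricSpace F]
    (φ : E → E) (ψ : X → X) (hφ : Continuous φ) (hψ : Continuous ψ)
    (π : E → X) (hπc : Continuous π) (hπs : Function.Surjective π)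
    (m : ℕ) (U : Fin m → Set X) (hUo : ∀ i, IsOpen (U i)) (hUcov : (⋃ i, U i) = Set.univ)
    (tr : ∀ i, (π ⁻¹' (U i) : Set E) → (U i × F))
    (htr_iso : ∀ i, Isometry (tr i)) (htr_surj : ∀ i, Function.Surjective (tr i))
    (htr_fst : ∀ i (z : (π ⁻¹' (U i) : Set E)), ((tr i z).1 : X) = π (z : E))
    (hsemi : ψ ∘ π = π ∘ φ)
    (hcontract : ∀ i j (z z' : E) (hz : z ∈ π ⁻¹' (U i)) (hz' : z' ∈ π ⁻¹' (U i))
      (hfz : φ z ∈ π ⁻¹' (U j)) (hfz' : φ z' ∈ π ⁻¹' (U j)),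
      dist (tr j ⟨φ z, hfz⟩).2 (tr j ⟨φ z', hfz'⟩).2 ≤ dist (tr i ⟨z, hz⟩).2 (tr i ⟨z', hz'⟩).2) :
    hpol φ = hpol ψ :=
  stmt8_general φ ψ hφ hψ π hπc hπs m U hUo hUcov tr htr_iso htr_fst hsemi hcontract
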